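/- Let C be a class of functions {±1}^n → {±1} and let 𝒟 be a family of distributions over {±1}^n that is closed under restrictions. Let A be a deterministic learner such that for every D ∈ 𝒟, every f ∈ C, and every k ≥ m, E_{S ~ (D_f)^k}[error(A(S), D_f)] ≤ ε'. Let D* be a distribution over {±1}^n admitting a size-s depth-d subcube decomposition into 𝒟, witnessed by pairwise disjoint restrictions ρ₁, …, ρ_s, each of depth at most d, covering the support of D*, with (D*)_{ρ_i} ∈ 𝒟 for every i. Let f ∈ C and let m_train ≥ (s/ε')·max(2m, 8). Draw S_train consisting of m_train i.i.d. samples from D*_f and define H(ρ) := A((S_train)_ρ) for every restriction ρ. Then E_{S_train}[error(P∘H, D*_f)] ≤ 2ε', where P∘H(x) = H(ρ_i)(x) for the unique i (if any) with x consistent with ρ_i and ⊥ (counted as a misclassification) otherwise. -/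

import Mathlib

/-! The error of `P ∘ H` splits over the subcubes as `∑ᵢ pᵢ · error(A(S_ρᵢ), D*_{ρᵢ})`, where `pᵢ`
is the mass of the `i`-th subcube. Given its size `k`, the restricted sample `S_ρᵢ` consists of `k`
i.i.d. draws from `D*_{ρᵢ} ∈ 𝒟`, and `k ~ Bin(m_train, pᵢ)`. A subcube with `pᵢ ≤ ε'/s` contributes
at most `ε'/s`. Otherwise Chebyshev gives `k ≥ m` except with probability `4 / (pᵢ m_train)`, so the
subcube contributes at most `4 / m_train + pᵢ ε' ≤ ε'/s + pᵢ ε'`. Summing over the `s` disjoint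
subcubes gives `ε' + ε'`. -/

open scoped Classical

/-- Points of the cube `{±1}^n`, encoded as `Fin n → Bool`. -/
abbrev Cube (n : ℕ) := Fin n → Bool

/-- Restrictions `ρ ∈ {±1,⋆}^n`, with `none` playing the role of `⋆`. -/
abbrev Rst (n : ℕ) := Fin n → Option Bool

/-- Labeled examples. -/
abbrev Lab (n : ℕ) := Cube n × Bool

/-- `x` is consistent with the restriction `ρ`. -/
def Consistent {n : ℕ} (x : Cube n) (ρ : Rst n) : Prop :=
  ∀ i : Fin n, ∀ b : Bool, ρ i = some b → x i = b

/-- The depth (number of non-⋆ coordinates) of a restriction. -/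
def rdepth {n : ℕ} (ρ : Rst n) : ℕ :=
  (Finset.univ.filter (fun i => ρ i ≠ none)).card

/-- `IsDT n d T` : `T` is the set of leaf restrictions of a depth-`d` decision tree over `{±1}^n`. -/
inductive IsDT (n : ℕ) : ℕ → Finset (Rst n) → Prop
  | leaf : IsDT n 0 {fun _ => none}
  | node {d : ℕ} (i : Fin n) {T₀ T₁ : Finset (Rst n)} :
      IsDT n d T₀ → IsDT n d T₁ →
      (∀ ℓ ∈ T₀, ℓ i = none) → (∀ ℓ ∈ T₁, ℓ i = none) →
      IsDT n (d + 1)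
        (T₀.image (fun ℓ => Function.update ℓ i (some false)) ∪
         T₁.image (fun ℓ => Function.update ℓ i (some true)))

/-- Empirical error of a hypothesis on a labeled multiset. -/
noncomputable def errS {n : ℕ} (h : Cube n → Bool) (S : Multiset (Lab n)) : ℝ :=
  ((S.filter (fun p => h p.1 ≠ p.2)).card : ℝ) / (S.card : ℝ)

/-- Empirical error of a partial (`Option Bool`-valued) hypothesis on a labeled multiset;
`⊥ = none` always counts as a misclassification. -/
noncomputable def errSo {n : ℕ} (h : Cube n → Option Bool) (S : Multiset (Lab n)) : ℝ :=
  ((S.filter (fun p => h p.1 ≠ some p.2)).card : ℝ) / (S.card : ℝ)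

/-- True error of a hypothesis with respect to a distribution on labeled examples. -/
noncomputable def errD {n : ℕ} (h : Cube n → Bool) (D : Lab n → ℝ) : ℝ :=
  ∑ p : Lab n, if h p.1 ≠ p.2 then D p else 0

/-- True error of a partial hypothesis with respect to a distribution on labeled examples. -/
noncomputable def errDo {n : ℕ} (h : Cube n → Option Bool) (D : Lab n → ℝ) : ℝ :=
  ∑ p : Lab n, if h p.1 ≠ some p.2 then D p else 0

/-- The multiset of samples of a tuple. -/
def toMS {α : Type*} {m : ℕ} (y : Fin m → α) : Multiset α := ↑(List.ofFn y)

/-- `T ∘ H` : the decision-tree-composed hypothesis. -/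
noncomputable def treeHyp {n : ℕ} (T : Finset (Rst n)) (H : Rst n → Cube n → Bool)
    (x : Cube n) : Bool :=
  if h : ∃ ℓ, ℓ ∈ T ∧ Consistent x ℓ then H h.choose x else false

/-- `P ∘ H` : the subcube-partition-composed hypothesis (`none` = ⊥ off the partition). -/
noncomputable def partHyp {n s : ℕ} (ρ : Fin s → Rst n) (H : Rst n → Cube n → Bool)
    (x : Cube n) : Option Bool :=
  if h : ∃ i, Consistent x (ρ i) then some (H (ρ h.choose) x) else none

/-- `L ∘ H` : the subcube-list-composed hypothesis (first consistent subcube wins). -/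
noncomputable def listHyp {n : ℕ} (H : Rst n → Cube n → Bool) :
    List (Rst n) → Cube n → Option Bool
  | [], _ => none
  | π :: L, x => if Consistent x π then some (H π x) else listHyp H L x

/-- Mass of a distribution on the subcube of a restriction. -/
noncomputable def rmass {n : ℕ} (D : Cube n → ℝ) (ρ : Rst n) : ℝ :=
  ∑ x ∈ Finset.univ.filter (fun x => Consistent x ρ), D x

/-- `D` conditioned on the subcube of the restriction `ρ`. -/
noncomputable def condD {n : ℕ} (D : Cube n → ℝ) (ρ : Rst n) : Cube n → ℝ :=
  fun x => if Consistent x ρ then D x / rmass D ρ else 0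

/-- The labeled distribution `D_f` of `(x, f(x))`, `x ~ D`. -/
def labD {n : ℕ} (D : Cube n → ℝ) (f : Cube n → Bool) : Lab n → ℝ :=
  fun p => if p.2 = f p.1 then D p.1 else 0

open Finset

section IID

variable {α : Type*}

lemma toMS_cons {N : ℕ} (a : α) (y : Fin N → α) : toMS (Fin.cons a y) = a ::ₘ toMS y := by
  simp [toMS, List.ofFn_succ]

variable [Fintype α] {P : α → ℝ} {N : ℕ}

def expectIID (P : α → ℝ) (N : ℕ) (F : (Fin N → α) → ℝ) : ℝ :=
  ∑ y : Fin N → α, (∏ j, P (y j)) * F y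

lemma expectIID_succ (P : α → ℝ) (F : (Fin (N + 1) → α) → ℝ) :
    expectIID P (N + 1) F = ∑ a, P a * expectIID P N (fun y => F (Fin.cons a y)) := by
  rw [expectIID, ← Fintype.sum_equiv (Fin.consEquiv fun _ => α) _ _ fun _ => rfl,
    Fintype.sum_prod_type]
  refine sum_congr rfl fun a _ => ?_
  simp only [expectIID, mul_sum, Fin.consEquiv_apply, Fin.prod_univ_succ, Fin.cons_zero,
    Fin.cons_succ, mul_assoc]
  rfl

lemma expectIID_const (hP1 : ∑ a, P a = 1) (c : ℝ) : expectIID P N (fun _ => c) = c := by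
  rw [expectIID, ← sum_mul, ← Fintype.sum_pow, hP1, one_pow, one_mul]

lemma expectIID_mono (hP0 : ∀ a, 0 ≤ P a) {F F' : (Fin N → α) → ℝ} (h : ∀ y, F y ≤ F' y) :
    expectIID P N F ≤ expectIID P N F' :=
  sum_le_sum fun y _ => mul_le_mul_of_nonneg_left (h y) (prod_nonneg fun _ _ => hP0 _)

lemma expectIID_le (hP0 : ∀ a, 0 ≤ P a) (hP1 : ∑ a, P a = 1) {F : (Fin N → α) → ℝ} {c : ℝ}
    (h : ∀ y, F y ≤ c) : expectIID P N F ≤ c :=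
  (expectIID_mono hP0 h).trans_eq (expectIID_const hP1 c)

lemma expectIID_const_mul (c : ℝ) (F : (Fin N → α) → ℝ) :
    expectIID P N (fun y => c * F y) = c * expectIID P N F := by
  simp only [expectIID, mul_sum, mul_left_comm]

lemma expectIID_sum {ι : Type*} (s : Finset ι) (F : ι → (Fin N → α) → ℝ) :
    expectIID P N (fun y => ∑ i ∈ s, F i y) = ∑ i ∈ s, expectIID P N (F i) := by
  simp only [expectIID, mul_sum]
  exact sum_comm

end IID

section Binomial

def binomWeight (p : ℝ) (N k : ℕ) : ℝ := N.choose k * p ^ k * (1 - p) ^ (N - k)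

variable {p : ℝ} {N : ℕ}

lemma binomWeight_nonneg (hp0 : 0 ≤ p) (hp1 : p ≤ 1) (k : ℕ) : 0 ≤ binomWeight p N k := by
  have : 0 ≤ 1 - p := by linarith
  unfold binomWeight; positivity

lemma binomWeight_eq_eval_bernsteinPolynomial (k : ℕ) :
    binomWeight p N k = (bernsteinPolynomial ℝ N k).eval p := by
  simp [binomWeight, bernsteinPolynomial]

lemma sum_binomWeight : ∑ k ∈ range (N + 1), binomWeight p N k = 1 := by
  simpa [binomWeight_eq_eval_bernsteinPolynomial, Polynomial.eval_finsetSum] using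
    congrArg (Polynomial.eval p) (bernsteinPolynomial.sum ℝ N)

lemma sum_sq_mul_binomWeight :
    ∑ k ∈ range (N + 1), (N * p - k) ^ 2 * binomWeight p N k = N * p * (1 - p) := by
  simpa [binomWeight_eq_eval_bernsteinPolynomial, Polynomial.eval_finsetSum, mul_assoc] using
    congrArg (Polynomial.eval p) (bernsteinPolynomial.variance ℝ N)

lemma binomWeight_succ_zero : binomWeight p (N + 1) 0 = (1 - p) * binomWeight p N 0 := by
  simp [binomWeight, pow_succ, mul_comm]

lemma binomWeight_succ_succ (k : ℕ) :
    binomWeight p (N + 1) (k + 1) = p * binomWeight p N k + (1 - p) * binomWeight p N (k + 1) := by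
  rcases lt_or_ge k N with hk | hk
  · obtain ⟨j, rfl⟩ := Nat.exists_eq_add_of_lt hk
    simp only [binomWeight, Nat.choose_succ_succ, Nat.cast_add,
      show k + j + 1 + 1 - (k + 1) = j + 1 by omega, show k + j + 1 - k = j + 1 by omega,
      show k + j + 1 - (k + 1) = j by omega]
    ring
  · simp [binomWeight, Nat.choose_succ_succ, Nat.choose_eq_zero_of_lt (Nat.lt_succ_of_le hk),
      show N + 1 - (k + 1) = N - k by omega]
    ring

/-- Pascal's rule, summed against `E`. -/
lemma sum_binomWeight_succ_mul (E : ℕ → ℝ) :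
    ∑ k ∈ range (N + 2), binomWeight p (N + 1) k * E k =
      p * ∑ k ∈ range (N + 1), binomWeight p N k * E (k + 1) +
        (1 - p) * ∑ k ∈ range (N + 1), binomWeight p N k * E k := by
  have hlast : binomWeight p N (N + 1) = 0 := by simp [binomWeight]
  have htail : ∑ k ∈ range (N + 1), binomWeight p N (k + 1) * E (k + 1) =
      ∑ k ∈ range N, binomWeight p N (k + 1) * E (k + 1) := by
    rw [sum_range_succ, hlast, zero_mul, add_zero]
  rw [sum_range_succ', sum_range_succ' (fun k => binomWeight p N k * E k), ← htail]
  simp only [binomWeight_succ_succ, binomWeight_succ_zero, add_mul, sum_add_distrib, mul_assoc,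
    ← mul_sum]
  ring

/-- Chebyshev's inequality for the lower tail of `Bin(N, p)` below half its mean. -/
lemma sum_binomWeight_lt_le (hp0 : 0 ≤ p) (hp1 : p ≤ 1) {m : ℕ} (hm : 2 * m ≤ p * N) :
    ∑ k ∈ range (N + 1), (if k < m then binomWeight p N k else 0) ≤ 4 / (p * N) := by
  rcases (mul_nonneg hp0 N.cast_nonneg).eq_or_lt with hpN | hpN
  · have hm0 : m = 0 := by exact_mod_cast (by linarith [m.cast_nonneg (α := ℝ)] : (m : ℝ) = 0)
    simp [hm0, ← hpN]
  calc ∑ k ∈ range (N + 1), (if k < m then binomWeight p N k else 0)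
      ≤ ∑ k ∈ range (N + 1), 4 / (p * N) ^ 2 * ((N * p - k) ^ 2 * binomWeight p N k) := by
        refine sum_le_sum fun k _ => ?_
        have hb := binomWeight_nonneg (N := N) hp0 hp1 k
        split_ifs with hk
        · have hkm : (k : ℝ) + 1 ≤ m := by exact_mod_cast hk
          have hdev : 1 ≤ 4 / (p * N) ^ 2 * (N * p - k) ^ 2 := by
            rw [div_mul_eq_mul_div, le_div_iff₀ (by positivity)]
            nlinarith
          nlinarith
        · positivity
    _ = 4 / (p * N) ^ 2 * (N * p * (1 - p)) := by rw [← mul_sum, sum_sq_mul_binomWeight]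
    _ ≤ 4 / (p * N) ^ 2 * (p * N) :=
        mul_le_mul_of_nonneg_left (by nlinarith [mul_nonneg hp0 hpN.le]) (by positivity)
    _ = 4 / (p * N) := by field_simp

end Binomial

section Conditioning

variable {α : Type*} [Fintype α] {P : α → ℝ} {q : α → Prop}

noncomputable def massOf (P : α → ℝ) (q : α → Prop) : ℝ := ∑ a ∈ univ.filter q, P a

/-- Zero everywhere when `q` has no mass. -/
noncomputable def condOn (P : α → ℝ) (q : α → Prop) (a : α) : ℝ :=
  if q a then P a / massOf P q else 0

lemma massOf_nonneg (hP0 : ∀ a, 0 ≤ P a) : 0 ≤ massOf P q :=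
  sum_nonneg fun a _ => hP0 a

lemma massOf_le_one (hP0 : ∀ a, 0 ≤ P a) (hP1 : ∑ a, P a = 1) : massOf P q ≤ 1 :=
  hP1 ▸ sum_le_sum_of_subset_of_nonneg (filter_subset _ _) fun a _ _ => hP0 a

lemma condOn_nonneg (hP0 : ∀ a, 0 ≤ P a) (a : α) : 0 ≤ condOn P q a := by
  unfold condOn
  split_ifs
  exacts [div_nonneg (hP0 a) (massOf_nonneg hP0), le_rfl]

lemma sum_condOn_eq_div : ∑ a, condOn P q a = massOf P q / massOf P q := by
  rw [massOf, sum_div, sum_filter]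
  rfl

lemma sum_condOn (hq : 0 < massOf P q) : ∑ a, condOn P q a = 1 := by
  rw [sum_condOn_eq_div, div_self hq.ne']

lemma sum_condOn_le_one : ∑ a, condOn P q a ≤ 1 :=
  sum_condOn_eq_div.trans_le (div_self_le_one _)

lemma massOf_mul_condOn (hP0 : ∀ a, 0 ≤ P a) (a : α) :
    massOf P q * condOn P q a = if q a then P a else 0 := by
  unfold condOn
  split_ifs with ha
  · rcases (massOf_nonneg (q := q) hP0).eq_or_lt with h | h
    · rw [← h, zero_mul]
      exact ((sum_eq_zero_iff_of_nonneg fun b _ => hP0 b).1 h.symm a (by simpa using ha)).symm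
    · field_simp
  · rw [mul_zero]

lemma sum_mul_ite_eq_condOn (hP0 : ∀ a, 0 ≤ P a) (hP1 : ∑ a, P a = 1) (X : α → ℝ) (Y : ℝ) :
    ∑ a, P a * (if q a then X a else Y) =
      massOf P q * ∑ a, condOn P q a * X a + (1 - massOf P q) * Y := by
  have hpt : ∀ a, P a * (if q a then X a else Y) =
      massOf P q * condOn P q a * X a + (P a - massOf P q * condOn P q a) * Y := by
    intro a
    rw [massOf_mul_condOn hP0]
    split_ifs <;> ring
  have hmass : ∑ a, massOf P q * condOn P q a = massOf P q := by
    simp only [massOf_mul_condOn hP0]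
    rw [← sum_filter]
    rfl
  simp only [hpt, sum_add_distrib, ← sum_mul, sum_sub_distrib, hmass, hP1, mul_assoc, ← mul_sum]

lemma sum_massOf_le_one (hP0 : ∀ a, 0 ≤ P a) (hP1 : ∑ a, P a = 1) {ι : Type*} [Fintype ι]
    (q : ι → α → Prop) (hq : ∀ i j, i ≠ j → ∀ a, q i a → q j a → False) :
    ∑ i, massOf P (q i) ≤ 1 := by
  rw [← hP1]
  unfold massOf
  rw [← sum_biUnion]
  · exact sum_le_sum_of_subset_of_nonneg (subset_univ _) fun a _ _ => hP0 a
  · intro i _ j _ hij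
    exact disjoint_filter.2 fun a _ hi hj => hq i j hij a hi hj

/-- Conditioned on the number `k` of samples satisfying `q`, which is `Bin(N, massOf P q)`,
those samples are `k` independent draws from `condOn P q`. -/
theorem expectIID_filter (hP0 : ∀ a, 0 ≤ P a) (hP1 : ∑ a, P a = 1) (N : ℕ)
    (G : Multiset α → ℝ) :
    expectIID P N (fun y => G ((toMS y).filter q)) =
      ∑ k ∈ range (N + 1),
        binomWeight (massOf P q) N k * expectIID (condOn P q) k (fun z => G (toMS z)) := by
  induction N generalizing G with
  | zero => simp [expectIID, binomWeight, toMS]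
  | succ N ih =>
    have hcond : ∀ k, expectIID (condOn P q) (k + 1) (fun z => G (toMS z)) =
        ∑ a, condOn P q a * expectIID (condOn P q) k (fun z => G (a ::ₘ toMS z)) := by
      intro k
      simp only [expectIID_succ, toMS_cons]
    calc expectIID P (N + 1) (fun y => G ((toMS y).filter q))
        = ∑ a, P a * (if q a then expectIID P N (fun y => G (a ::ₘ (toMS y).filter q))
            else expectIID P N (fun y => G ((toMS y).filter q))) := by
          rw [expectIID_succ]
          refine sum_congr rfl fun a _ => ?_
          split_ifs with ha
          · simp only [toMS_cons, Multiset.filter_cons_of_pos _ ha]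
          · simp only [toMS_cons, Multiset.filter_cons_of_neg _ ha]
      _ = massOf P q * ∑ a, condOn P q a * ∑ k ∈ range (N + 1), binomWeight (massOf P q) N k *
              expectIID (condOn P q) k (fun z => G (a ::ₘ toMS z)) +
            (1 - massOf P q) * ∑ k ∈ range (N + 1),
              binomWeight (massOf P q) N k * expectIID (condOn P q) k (fun z => G (toMS z)) := by
          rw [← sum_mul_ite_eq_condOn hP0 hP1]
          refine sum_congr rfl fun a _ => ?_
          split_ifs
          · rw [ih fun S => G (a ::ₘ S)]
          · rw [ih G]
      _ = _ := by
          rw [sum_binomWeight_succ_mul]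
          simp only [hcond, mul_sum]
          rw [sum_comm]
          simp only [mul_left_comm]

lemma expectIID_filter_le (hP0 : ∀ a, 0 ≤ P a) (hP1 : ∑ a, P a = 1) (hq : 0 < massOf P q)
    {G : Multiset α → ℝ} (hG1 : ∀ S, G S ≤ 1) {m N : ℕ} {ε : ℝ} (hε : 0 ≤ ε)
    (hG : ∀ k, m ≤ k → expectIID (condOn P q) k (fun z => G (toMS z)) ≤ ε)
    (hN : 2 * m ≤ massOf P q * N) :
    expectIID P N (fun y => G ((toMS y).filter q)) ≤ 4 / (massOf P q * N) + ε := by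
  set p := massOf P q
  have hb := binomWeight_nonneg (N := N) hq.le (massOf_le_one hP0 hP1)
  rw [expectIID_filter hP0 hP1]
  calc ∑ k ∈ range (N + 1), binomWeight p N k * expectIID (condOn P q) k (fun z => G (toMS z))
      ≤ ∑ k ∈ range (N + 1),
          ((if k < m then binomWeight p N k else 0) + binomWeight p N k * ε) := by
        refine sum_le_sum fun k _ => ?_
        split_ifs with hk
        · have hE1 : expectIID (condOn P q) k (fun z => G (toMS z)) ≤ 1 :=
            expectIID_le (condOn_nonneg hP0) (sum_condOn hq) fun z => hG1 _
          nlinarith [hb k, mul_nonneg (hb k) hε]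
        · rw [zero_add]
          exact mul_le_mul_of_nonneg_left (hG k (not_lt.1 hk)) (hb k)
    _ = ∑ k ∈ range (N + 1), (if k < m then binomWeight p N k else 0) +
          (∑ k ∈ range (N + 1), binomWeight p N k) * ε := by rw [sum_add_distrib, sum_mul]
    _ ≤ 4 / (p * N) + ε := by
        rw [sum_binomWeight, one_mul]
        gcongr
        exact sum_binomWeight_lt_le hq.le (massOf_le_one hP0 hP1) hN

/-- Either `q` has mass at most `ε / s`, or the `q`-part of the sample has size at least `m`
except with probability `4 / (massOf P q * N) ≤ ε / (s * massOf P q)`. -/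
lemma massOf_mul_expectIID_filter_le (hP0 : ∀ a, 0 ≤ P a) (hP1 : ∑ a, P a = 1)
    {G : Multiset α → ℝ} (hG1 : ∀ S, G S ≤ 1) {m N : ℕ} {ε s : ℝ} (hε : 0 < ε) (hs : 0 < s)
    (hG : 0 < massOf P q → ∀ k, m ≤ k → expectIID (condOn P q) k (fun z => G (toMS z)) ≤ ε)
    (hN : s / ε * max (2 * (m : ℝ)) 8 ≤ N) :
    massOf P q * expectIID P N (fun y => G ((toMS y).filter q)) ≤ ε / s + massOf P q * ε := by
  set p := massOf P q
  have hp0 : 0 ≤ p := massOf_nonneg hP0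
  rcases le_or_gt p (ε / s) with hsmall | hlarge
  · have hE1 : expectIID P N (fun y => G ((toMS y).filter q)) ≤ 1 :=
      expectIID_le hP0 hP1 fun y => hG1 _
    nlinarith [mul_nonneg hp0 hε.le]
  have hq : 0 < p := (div_pos hε hs).trans hlarge
  have hmax : max (2 * (m : ℝ)) 8 ≤ ε / s * N := by
    calc max (2 * (m : ℝ)) 8 = ε / s * (s / ε * max (2 * (m : ℝ)) 8) := by field_simp
      _ ≤ ε / s * N := by gcongr
  have h2m : 2 * (m : ℝ) ≤ p * N :=
    (le_max_left _ _).trans (hmax.trans (by gcongr))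
  have hN8 : 8 ≤ ε / s * N := (le_max_right _ _).trans hmax
  have hNpos : (0 : ℝ) < N := by
    by_contra h
    nlinarith [N.cast_nonneg (α := ℝ), div_pos hε hs]
  have h4N : 4 / (N : ℝ) ≤ ε / s := by
    rw [div_le_div_iff₀ hNpos hs]
    rw [div_mul_eq_mul_div, le_div_iff₀ hs] at hN8
    linarith
  calc p * expectIID P N (fun y => G ((toMS y).filter q))
      ≤ p * (4 / (p * N) + ε) :=
        mul_le_mul_of_nonneg_left (expectIID_filter_le hP0 hP1 hq hG1 hε.le (hG hq) h2m) hp0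
    _ = 4 / N + p * ε := by field_simp
    _ ≤ ε / s + p * ε := by linarith

end Conditioning

section Subcubes

variable {n s : ℕ}

lemma labD_nonneg {D : Cube n → ℝ} (hD0 : ∀ x, 0 ≤ D x) (f : Cube n → Bool) (p : Lab n) :
    0 ≤ labD D f p := by
  unfold labD
  split_ifs
  exacts [hD0 _, le_rfl]

lemma sum_labD (D : Cube n → ℝ) (f : Cube n → Bool) : ∑ p, labD D f p = ∑ x, D x := by
  simp [labD, Fintype.sum_prod_type]

lemma massOf_labD (D : Cube n → ℝ) (f : Cube n → Bool) (ρ : Rst n) :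
    massOf (labD D f) (fun p => Consistent p.1 ρ) = rmass D ρ := by
  simp [massOf, rmass, labD, sum_filter, Fintype.sum_prod_type]

lemma condOn_labD (D : Cube n → ℝ) (f : Cube n → Bool) (ρ : Rst n) :
    condOn (labD D f) (fun p => Consistent p.1 ρ) = labD (condD D ρ) f := by
  ext p
  rw [condOn, massOf_labD]
  unfold labD condD
  split_ifs <;> simp_all

lemma errD_le_sum {D : Lab n → ℝ} (hD0 : ∀ p, 0 ≤ D p) (h : Cube n → Bool) :
    errD h D ≤ ∑ p, D p :=
  sum_le_sum fun p _ => by split_ifs <;> simp [hD0 p]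

lemma massOf_mul_errD_condOn {L : Lab n → ℝ} (hL0 : ∀ p, 0 ≤ L p) (q : Lab n → Prop)
    (h : Cube n → Bool) :
    massOf L q * errD h (condOn L q) = ∑ p, if q p ∧ h p.1 ≠ p.2 then L p else 0 := by
  rw [errD, mul_sum]
  refine sum_congr rfl fun p _ => ?_
  rw [mul_ite, mul_zero, massOf_mul_condOn hL0]
  by_cases hq : q p <;> simp [hq]

lemma errDo_partHyp_le {L : Lab n → ℝ} (hL0 : ∀ p, 0 ≤ L p) {ρ : Fin s → Rst n}
    (hcover : ∀ p, L p ≠ 0 → ∃ i, Consistent p.1 (ρ i)) (H : Rst n → Cube n → Bool) :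
    errDo (partHyp ρ H) L ≤ ∑ i, massOf L (fun p => Consistent p.1 (ρ i)) *
      errD (H (ρ i)) (condOn L (fun p => Consistent p.1 (ρ i))) := by
  simp only [massOf_mul_errD_condOn hL0]
  rw [errDo, sum_comm]
  refine sum_le_sum fun p _ => ?_
  have hterm : ∀ i, 0 ≤ if Consistent p.1 (ρ i) ∧ H (ρ i) p.1 ≠ p.2 then L p else 0 :=
    fun i => by split_ifs <;> simp [hL0 p]
  split_ifs with hmis
  · by_cases hLp : L p = 0
    · exact hLp ▸ sum_nonneg fun i _ => hterm i
    have hex := hcover p hLp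
    have hH : H (ρ hex.choose) p.1 ≠ p.2 := fun h => hmis (by rw [partHyp, dif_pos hex, h])
    calc L p = if Consistent p.1 (ρ hex.choose) ∧ H (ρ hex.choose) p.1 ≠ p.2 then L p else 0 :=
          (if_pos ⟨hex.choose_spec, hH⟩).symm
      _ ≤ _ := single_le_sum (fun i _ => hterm i) (mem_univ _)
  · exact sum_nonneg fun i _ => hterm i

lemma expectIID_errDo_partHyp_le {L : Lab n → ℝ} (hL0 : ∀ p, 0 ≤ L p) {ρ : Fin s → Rst n}
    (hcover : ∀ p, L p ≠ 0 → ∃ i, Consistent p.1 (ρ i)) (B : Multiset (Lab n) → Cube n → Bool)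
    (N : ℕ) :
    expectIID L N (fun y =>
        errDo (partHyp ρ fun r => B ((toMS y).filter fun p => Consistent p.1 r)) L) ≤
      ∑ i, massOf L (fun p => Consistent p.1 (ρ i)) * expectIID L N (fun y =>
        errD (B ((toMS y).filter fun p => Consistent p.1 (ρ i)))
          (condOn L fun p => Consistent p.1 (ρ i))) := by
  simp only [← expectIID_const_mul, ← expectIID_sum]
  exact expectIID_mono hL0 fun y => errDo_partHyp_le hL0 hcover _

lemma sum_fin_const_div_le {ε : ℝ} (hε : 0 ≤ ε) : ∑ _i : Fin s, ε / s ≤ ε := by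
  rw [sum_const, card_univ, Fintype.card_fin, nsmul_eq_mul]
  rcases eq_or_ne (s : ℝ) 0 with h | h
  · simp [h, hε]
  · rw [mul_div_cancel₀ _ h]

end Subcubes

theorem true_partition_has_low_true_error_general
    (n m s : ℕ) (ε' : ℝ) (hε' : 0 < ε')
    (C : Set (Cube n → Bool)) (𝒟 : Set (Cube n → ℝ))
    (A : Multiset (Lab n) → Cube n → Bool)
    (hA : ∀ D ∈ 𝒟, ∀ f ∈ C, ∀ k : ℕ, m ≤ k →
      ∑ y : Fin k → Lab n, (∏ i, labD D f (y i)) * errD (A (toMS y)) (labD D f) ≤ ε')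
    (Dstar : Cube n → ℝ) (hD0 : ∀ x, 0 ≤ Dstar x) (hD1 : ∑ x : Cube n, Dstar x = 1)
    (ρ : Fin s → Rst n)
    (hdisj : ∀ i j : Fin s, i ≠ j →
      ∀ x : Cube n, Consistent x (ρ i) → Consistent x (ρ j) → False)
    (hcover : ∀ x : Cube n, Dstar x ≠ 0 → ∃ i, Consistent x (ρ i))
    (hdecomp : ∀ i : Fin s, 0 < rmass Dstar (ρ i) → condD Dstar (ρ i) ∈ 𝒟)
    (f : Cube n → Bool) (hf : f ∈ C)
    (mtrain : ℕ) (hmtrain : ((s : ℝ) / ε') * max (2 * (m : ℝ)) 8 ≤ (mtrain : ℝ)) :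
    ∑ y : Fin mtrain → Lab n, (∏ i, labD Dstar f (y i)) *
        errDo (partHyp ρ
                (fun r => A ((toMS y).filter (fun p => Consistent p.1 r))))
              (labD Dstar f)
      ≤ 2 * ε' := by
  set L := labD Dstar f
  have hL0 : ∀ p, 0 ≤ L p := labD_nonneg hD0 f
  have hL1 : ∑ p, L p = 1 := (sum_labD Dstar f).trans hD1
  have hcover' : ∀ p, L p ≠ 0 → ∃ i, Consistent p.1 (ρ i) :=
    fun p hp => hcover p.1 fun h => hp (by simp [L, labD, h])
  have hmass : ∑ i, massOf L (fun p => Consistent p.1 (ρ i)) ≤ 1 :=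
    sum_massOf_le_one hL0 hL1 _ fun i j hij p => hdisj i j hij p.1
  change expectIID L mtrain _ ≤ _
  refine (expectIID_errDo_partHyp_le hL0 hcover' A mtrain).trans ?_
  calc _ ≤ ∑ i, (ε' / s + massOf L (fun p => Consistent p.1 (ρ i)) * ε') :=
        sum_le_sum fun i _ =>
          massOf_mul_expectIID_filter_le hL0 hL1
            (fun S => (errD_le_sum (condOn_nonneg hL0) _).trans sum_condOn_le_one) hε'
            (by exact_mod_cast i.pos)
            (fun hq k hk => by
              rw [condOn_labD]
              exact hA _ (hdecomp i (massOf_labD Dstar f (ρ i) ▸ hq)) f hf k hk)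
            hmtrain
    _ ≤ 2 * ε' := by
        rw [sum_add_distrib, ← sum_mul]
        linarith [sum_fin_const_div_le (s := s) hε'.le, mul_le_mul_of_nonneg_right hmass hε'.le]

/-- existence of a subcube partition with low expected error. If `A` learns
every `D ∈ 𝒟` to expected error `ε'` from `≥ m` i.i.d. samples, `𝒟` is closed under
restrictions, `D*` admits a size-`s` depth-`d` subcube decomposition into `𝒟` witnessed by
`ρ₁,…,ρ_s`, and `m_train ≥ (s/ε')·max(2m,8)`, then training `A` on the restricted training
sets yields `E[error(P∘H, D*_f)] ≤ 2ε'`. -/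
theorem true_partition_has_low_true_error
    (n m d s : ℕ) (hs : 1 ≤ s) (ε' : ℝ) (hε' : 0 < ε')
    (C : Set (Cube n → Bool)) (𝒟 : Set (Cube n → ℝ))
    (hclosed : ∀ D ∈ 𝒟, ∀ ρ : Rst n, 0 < rmass D ρ → condD D ρ ∈ 𝒟)
    (A : Multiset (Lab n) → Cube n → Bool)
    (hA : ∀ D ∈ 𝒟, ∀ f ∈ C, ∀ k : ℕ, m ≤ k →
      ∑ y : Fin k → Lab n, (∏ i, labD D f (y i)) * errD (A (toMS y)) (labD D f) ≤ ε')
    (Dstar : Cube n → ℝ) (hD0 : ∀ x, 0 ≤ Dstar x) (hD1 : ∑ x : Cube n, Dstar x = 1)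
    (ρ : Fin s → Rst n) (hρdepth : ∀ i, rdepth (ρ i) ≤ d)
    (hdisj : ∀ i j : Fin s, i ≠ j →
      ∀ x : Cube n, Consistent x (ρ i) → Consistent x (ρ j) → False)
    (hcover : ∀ x : Cube n, Dstar x ≠ 0 → ∃ i, Consistent x (ρ i))
    (hdecomp : ∀ i : Fin s, 0 < rmass Dstar (ρ i) → condD Dstar (ρ i) ∈ 𝒟)
    (f : Cube n → Bool) (hf : f ∈ C)
    (mtrain : ℕ) (hmtrain : ((s : ℝ) / ε') * max (2 * (m : ℝ)) 8 ≤ (mtrain : ℝ)) :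
    ∑ y : Fin mtrain → Lab n, (∏ i, labD Dstar f (y i)) *
        errDo (partHyp ρ
                (fun r => A ((toMS y).filter (fun p => Consistent p.1 r))))
              (labD Dstar f)
      ≤ 2 * ε' :=
  true_partition_has_low_true_error_general n m s ε' hε' C 𝒟 A hA Dstar hD0 hD1 ρ hdisj hcover
    hdecomp f hf mtrain hmtrain
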